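/- arXiv:2105.01725 — 4 statements merged into one kernel-verified Lean document; each statement's English description precedes it below -/
import Mathlib

section
/- Let S ⊆ ℝ^n be nonempty and compact, let f : S → ℝ be bounded with bound M, and suppose μ ∈ ℝ^n lies in the set of means of probability measures supported on S. Then sup over probability measures P on S with mean μ of ∫ f dP equals inf over (ρ, θ) ∈ ℝ^n × ℝ such that ρᵀξ + θ ≥ f(ξ) for all ξ ∈ S, of μᵀρ + θ, provided μ lies in the interior of the set { ∫ ξ dQ : Q a probability distribution on S }. -/
/-!
Weak duality is the integral of an affine majorant `ρᵀξ + θ ≥ f` against a measure with mean `μ`.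
For the converse, let `A ⊆ ℝⁿ × ℝ` be the convex set of pairs (mean, expected cost) of probability
measures on `S`, and `v` the primal value. Mixing a measure of mean `m` with one whose mean is the
reflection `μ - t (m - μ)`, available for `m` near `μ` because `μ` is interior, gives a measure of
mean `μ`; this bounds the costs in `A` near `μ` by `v + O(‖m - μ‖)`, so `(μ, w) ∉ closure A` for
`w > v`. Hahn–Banach then separates `(μ, w)` from `A` by a hyperplane that is not vertical (it also
separates `(μ, w)` from a point `(μ, r)` of `A` below it), i.e. by an affine majorant of `A` with
value at most `w` at `μ`. Evaluated on Dirac measures, this majorant is dual feasible.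
-/

open MeasureTheory Metric Set

section

variable {E : Type*} [NormedAddCommGroup E] [NormedSpace ℝ E] {A : Set (E × ℝ)} {μ : E} {c v : ℝ}

theorem Convex.mul_snd_sub_le (hA : Convex ℝ A) (hc : ∀ p ∈ A, c ≤ p.2)
    (hv : ∀ r, (μ, r) ∈ A → r ≤ v) {p : E × ℝ} (hp : p ∈ A) {t : ℝ} (ht : 0 ≤ t)
    (hq : μ - t • (p.1 - μ) ∈ Prod.fst '' A) : t * (p.2 - v) ≤ v - c := by
  obtain ⟨q, hqA, hq⟩ := hq
  have ht₁ : 0 < 1 + t := by linarith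
  have hmix := hA hp hqA (div_nonneg ht ht₁.le) (inv_nonneg.2 ht₁.le) (by field_simp; ring)
  have hcomb : (t / (1 + t)) • p + (1 + t)⁻¹ • q = (μ, (t * p.2 + q.2) / (1 + t)) := by
    ext
    · simp only [Prod.fst_add, Prod.smul_fst, hq]
      match_scalars <;> field_simp <;> ring
    · simp only [Prod.snd_add, Prod.smul_snd, smul_eq_mul]
      field_simp
  rw [hcomb] at hmix
  have hfiber := (div_le_iff₀ ht₁).1 (hv _ hmix)
  linarith [hc q hqA]

theorem Convex.snd_le_of_mem_closure (hA : Convex ℝ A) (hc : ∀ p ∈ A, c ≤ p.2)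
    (hv : ∀ r, (μ, r) ∈ A → r ≤ v) (hμ : μ ∈ interior (Prod.fst '' A)) {R : ℝ}
    (hR : (μ, R) ∈ closure A) : R ≤ v := by
  obtain ⟨δ, hδ, hball⟩ := nhds_basis_closedBall.mem_iff.1 (mem_interior_iff_mem_nhds.1 hμ)
  have hclosure : closure A ⊆ {p | δ * (p.2 - v) ≤ (v - c) * ‖p.1 - μ‖} := by
    refine closure_minimal (fun p hp => ?_) (isClosed_le (by fun_prop) (by fun_prop))
    rcases eq_or_ne p.1 μ with h | h
    · have := hv p.2 (h ▸ hp)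
      simp only [mem_ofPred_eq, h, sub_self, norm_zero, mul_zero]
      nlinarith
    · have hd : 0 < ‖p.1 - μ‖ := norm_pos_iff.2 (sub_ne_zero.2 h)
      have hq : μ - (δ / ‖p.1 - μ‖) • (p.1 - μ) ∈ closedBall μ δ := by
        rw [mem_closedBall, dist_eq_norm, sub_sub_cancel_left, norm_neg, norm_smul,
          Real.norm_of_nonneg (by positivity), div_mul_cancel₀ _ hd.ne']
      have := hA.mul_snd_sub_le hc hv hp (by positivity) (hball hq)
      rw [div_mul_eq_mul_div, div_le_iff₀ hd] at this
      simp only [mem_ofPred_eq]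
      linarith
  have := hclosure hR
  simp only [mem_ofPred_eq, sub_self, norm_zero, mul_zero] at this
  nlinarith

theorem Convex.exists_affine_majorant (hA : Convex ℝ A) (hc : ∀ p ∈ A, c ≤ p.2)
    (hv : ∀ r, (μ, r) ∈ A → r ≤ v) (hμ : μ ∈ interior (Prod.fst '' A)) {w : ℝ} (hw : v < w) :
    ∃ (ρ : E →L[ℝ] ℝ) (θ : ℝ), (∀ p ∈ A, p.2 ≤ ρ p.1 + θ) ∧ ρ μ + θ ≤ w := by
  have hw' : (μ, w) ∉ closure A := fun h => hw.not_ge (hA.snd_le_of_mem_closure hc hv hμ h)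
  obtain ⟨φ, u, hφA, hφw⟩ := geometric_hahn_banach_closed_point hA.closure isClosed_closure hw'
  set ρ := φ.comp (ContinuousLinearMap.inl ℝ E ℝ)
  set s := φ (0, 1)
  have hφ : ∀ p : E × ℝ, φ p = ρ p.1 + p.2 * s := fun p => by
    conv_lhs => rw [← Prod.fst_add_snd p, show ((0 : E), p.2) = p.2 • ((0 : E), (1 : ℝ)) by simp]
    rw [map_add, map_smul, smul_eq_mul]
    rfl
  rw [hφ] at hφw
  obtain ⟨p₀, hp₀, hp₀μ⟩ := interior_subset hμ
  have hs : 0 < s := by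
    have h₀ := hφA _ (subset_closure hp₀)
    rw [hφ, hp₀μ] at h₀
    have := hv p₀.2 (hp₀μ ▸ hp₀)
    nlinarith
  refine ⟨-s⁻¹ • ρ, u / s, fun p hp => ?_, ?_⟩
  · have := hφA p (subset_closure hp)
    rw [hφ] at this
    simp only [smul_apply, smul_eq_mul]
    field_simp
    linarith
  · simp only [smul_apply, smul_eq_mul]
    field_simp
    linarith

end

section

variable {α : Type*} [MeasurableSpace α] {P Q : Measure α} {S : Set α}

theorem integrable_of_norm_le_of_measure_compl_eq_zero {E : Type*} [NormedAddCommGroup E]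
    [IsFiniteMeasure P] (hP : P Sᶜ = 0) {g : α → E} (hg : AEStronglyMeasurable g P) {C : ℝ}
    (hC : ∀ x ∈ S, ‖g x‖ ≤ C) : Integrable g P :=
  .of_bound hg C (by filter_upwards [mem_ae_iff.2 hP] using hC)

theorem integrable_of_abs_le [IsFiniteMeasure P] (hP : P Sᶜ = 0) {g : α → ℝ} (hg : Measurable g)
    {C : ℝ} (hC : ∀ x ∈ S, |g x| ≤ C) : Integrable g P :=
  integrable_of_norm_le_of_measure_compl_eq_zero hP hg.aestronglyMeasurable hC

theorem integral_mono_of_measure_compl_eq_zero (hP : P Sᶜ = 0) {g h : α → ℝ}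
    (hg : Integrable g P) (hh : Integrable h P) (hgh : ∀ x ∈ S, g x ≤ h x) :
    ∫ x, g x ∂P ≤ ∫ x, h x ∂P :=
  integral_mono_ae hg hh (by filter_upwards [mem_ae_iff.2 hP] using hgh)

theorem integral_ofReal_smul_add_ofReal_smul {a b : ℝ} (ha : 0 ≤ a) (hb : 0 ≤ b) {g : α → ℝ}
    (hgP : Integrable g P) (hgQ : Integrable g Q) :
    ∫ x, g x ∂(ENNReal.ofReal a • P + ENNReal.ofReal b • Q) =
      a * ∫ x, g x ∂P + b * ∫ x, g x ∂Q := by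
  rw [integral_add_measure (hgP.smul_measure ENNReal.ofReal_ne_top)
      (hgQ.smul_measure ENNReal.ofReal_ne_top), integral_smul_measure, integral_smul_measure,
    ENNReal.toReal_ofReal ha, ENNReal.toReal_ofReal hb, smul_eq_mul, smul_eq_mul]

theorem isProbabilityMeasure_ofReal_smul_add_ofReal_smul [IsProbabilityMeasure P]
    [IsProbabilityMeasure Q] {a b : ℝ} (ha : 0 ≤ a) (hb : 0 ≤ b) (hab : a + b = 1) :
    IsProbabilityMeasure (ENNReal.ofReal a • P + ENNReal.ofReal b • Q) := by
  constructor
  simp only [Measure.add_apply, Measure.smul_apply, smul_eq_mul, measure_univ, mul_one]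
  rw [← ENNReal.ofReal_add ha hb, hab, ENNReal.ofReal_one]

end

section

variable {ι : Type*} {S : Set (ι → ℝ)} {f : (ι → ℝ) → ℝ} {M : ℝ}

def meanCostSet (S : Set (ι → ℝ)) (f : (ι → ℝ) → ℝ) : Set ((ι → ℝ) × ℝ) :=
  {p | ∃ P : Measure (ι → ℝ), IsProbabilityMeasure P ∧ P Sᶜ = 0 ∧
    (∀ i, ∫ ξ, ξ i ∂P = p.1 i) ∧ p.2 = ∫ ξ, f ξ ∂P}

theorem integrable_apply_of_isCompact (hS : IsCompact S) {P : Measure (ι → ℝ)}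
    [IsFiniteMeasure P] (hP : P Sᶜ = 0) (i : ι) : Integrable (fun ξ => ξ i) P := by
  obtain ⟨C, hC⟩ := hS.exists_bound_of_continuousOn (continuous_apply i).continuousOn
  exact integrable_of_norm_le_of_measure_compl_eq_zero hP
    (measurable_pi_apply i).aestronglyMeasurable hC

theorem convex_meanCostSet (hS : IsCompact S) (hf : Measurable f) (hM : ∀ ξ ∈ S, |f ξ| ≤ M) :
    Convex ℝ (meanCostSet S f) := by
  rintro _ ⟨P, hP, hPS, hPm, hPf⟩ _ ⟨Q, hQ, hQS, hQm, hQf⟩ a b ha hb hab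
  have := isProbabilityMeasure_ofReal_smul_add_ofReal_smul (P := P) (Q := Q) ha hb hab
  refine ⟨_, this, ?_, fun i => ?_, ?_⟩
  · simp [hPS, hQS]
  · rw [integral_ofReal_smul_add_ofReal_smul ha hb (integrable_apply_of_isCompact hS hPS i)
      (integrable_apply_of_isCompact hS hQS i), hPm, hQm]
    rfl
  · rw [integral_ofReal_smul_add_ofReal_smul ha hb (integrable_of_abs_le hPS hf hM)
      (integrable_of_abs_le hQS hf hM), ← hPf, ← hQf]
    rfl

theorem neg_le_snd_of_mem_meanCostSet (hf : Measurable f) (hM : ∀ ξ ∈ S, |f ξ| ≤ M)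
    {p : (ι → ℝ) × ℝ} (hp : p ∈ meanCostSet S f) : -M ≤ p.2 := by
  obtain ⟨P, hP, hPS, -, hPf⟩ := hp
  calc -M = ∫ _, -M ∂P := by simp
    _ ≤ ∫ ξ, f ξ ∂P := integral_mono_of_measure_compl_eq_zero hPS (integrable_const _)
        (integrable_of_abs_le hPS hf hM) fun ξ hξ => (abs_le.1 (hM ξ hξ)).1
    _ = p.2 := hPf.symm

theorem snd_le_of_mem_meanCostSet [Fintype ι] (hS : IsCompact S) (hf : Measurable f)
    (hM : ∀ ξ ∈ S, |f ξ| ≤ M) {p : (ι → ℝ) × ℝ} (hp : p ∈ meanCostSet S f)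
    {ρ : ι → ℝ} {θ : ℝ} (hfeas : ∀ ξ ∈ S, (∑ i, ρ i * ξ i) + θ ≥ f ξ) :
    p.2 ≤ (∑ i, p.1 i * ρ i) + θ := by
  obtain ⟨P, hP, hPS, hPm, hPf⟩ := hp
  have hint i : Integrable (fun ξ => ρ i * ξ i) P :=
    (integrable_apply_of_isCompact hS hPS i).const_mul (ρ i)
  calc p.2 = ∫ ξ, f ξ ∂P := hPf
    _ ≤ ∫ ξ, (∑ i, ρ i * ξ i) + θ ∂P :=
      integral_mono_of_measure_compl_eq_zero hPS (integrable_of_abs_le hPS hf hM)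
        ((integrable_finsetSum _ fun i _ => hint i).add (integrable_const θ)) hfeas
    _ = (∑ i, p.1 i * ρ i) + θ := by
      rw [integral_add (integrable_finsetSum _ fun i _ => hint i) (integrable_const θ),
        integral_finsetSum _ fun i _ => hint i]
      simp [integral_const_mul, hPm, mul_comm]

theorem mk_mem_meanCostSet [Countable ι] {ξ : ι → ℝ} (hξ : ξ ∈ S) :
    (ξ, f ξ) ∈ meanCostSet S f :=
  ⟨.dirac ξ, inferInstance, by simp [Measure.dirac_apply, hξ], fun i => integral_dirac _ ξ,
    (integral_dirac _ ξ).symm⟩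

theorem image_fst_meanCostSet :
    Prod.fst '' meanCostSet S f = {m | ∃ Q : Measure (ι → ℝ), IsProbabilityMeasure Q ∧
      Q Sᶜ = 0 ∧ ∀ i, ∫ ξ, ξ i ∂Q = m i} := by
  ext m
  constructor
  · rintro ⟨p, ⟨P, hP, hPS, hPm, -⟩, rfl⟩
    exact ⟨P, hP, hPS, hPm⟩
  · rintro ⟨P, hP, hPS, hPm⟩
    exact ⟨(m, ∫ ξ, f ξ ∂P), ⟨P, hP, hPS, hPm, rfl⟩, rfl⟩

end

theorem ContinuousLinearMap.apply_eq_sum_mul_single {ι : Type*} [Fintype ι] [DecidableEq ι]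
    (ρ : (ι → ℝ) →L[ℝ] ℝ) (m : ι → ℝ) : ρ m = ∑ i, m i * ρ (Pi.single i 1) := by
  conv_lhs => rw [← Finset.univ_sum_single m]
  simp only [map_sum]
  exact Finset.sum_congr rfl fun i _ => by
    rw [← smul_eq_mul, ← map_smul, ← Pi.single_smul, smul_eq_mul, mul_one]

theorem stmt_6_general (n : ℕ) (S : Set (Fin n → ℝ)) (hSc : IsCompact S)
    (f : (Fin n → ℝ) → ℝ) (hf : Measurable f)
    (M : ℝ) (hM : ∀ ξ ∈ S, |f ξ| ≤ M) (μ : Fin n → ℝ)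
    (hμ : μ ∈ interior {m : Fin n → ℝ |
      ∃ Q : Measure (Fin n → ℝ), IsProbabilityMeasure Q ∧ Q Sᶜ = 0 ∧
        ∀ i, (∫ ξ, ξ i ∂Q) = m i}) :
    sSup {x : ℝ | ∃ P : Measure (Fin n → ℝ), IsProbabilityMeasure P ∧ P Sᶜ = 0 ∧
        (∀ i, (∫ ξ, ξ i ∂P) = μ i) ∧ x = ∫ ξ, f ξ ∂P} =
    sInf {x : ℝ | ∃ (ρ : Fin n → ℝ) (θ : ℝ),
        (∀ ξ ∈ S, (∑ i, ρ i * ξ i) + θ ≥ f ξ) ∧ x = (∑ i, μ i * ρ i) + θ} := by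
  set D := {x : ℝ | ∃ (ρ : Fin n → ℝ) (θ : ℝ),
    (∀ ξ ∈ S, (∑ i, ρ i * ξ i) + θ ≥ f ξ) ∧ x = (∑ i, μ i * ρ i) + θ}
  change sSup {x | (μ, x) ∈ meanCostSet S f} = sInf D
  rw [← image_fst_meanCostSet (f := f)] at hμ
  obtain ⟨p₀, hp₀, hp₀μ⟩ := interior_subset hμ
  have hweak : ∀ x ∈ {x | (μ, x) ∈ meanCostSet S f}, ∀ y ∈ D, x ≤ y := by
    rintro x hx _ ⟨ρ, θ, hfeas, rfl⟩
    exact snd_le_of_mem_meanCostSet hSc hf hM hx hfeas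
  have hprimal : p₀.2 ∈ {x | (μ, x) ∈ meanCostSet S f} := hp₀μ ▸ hp₀
  have hdual : (∑ i, μ i * 0) + M ∈ D :=
    ⟨0, M, fun ξ hξ => by simpa using (abs_le.1 (hM ξ hξ)).2, rfl⟩
  refine le_antisymm (csSup_le ⟨_, hprimal⟩ fun x hx => le_csInf ⟨_, hdual⟩ (hweak x hx))
    (le_of_forall_gt_imp_ge_of_dense fun w hw => ?_)
  obtain ⟨ρ, θ, hρA, hρμ⟩ := (convex_meanCostSet hSc hf hM).exists_affine_majorant
    (fun _ => neg_le_snd_of_mem_meanCostSet hf hM)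
    (fun _ hr => le_csSup ⟨_, fun x hx => hweak x hx _ hdual⟩ hr) hμ hw
  have hfeas : ∀ ξ ∈ S, (∑ i, ρ (Pi.single i 1) * ξ i) + θ ≥ f ξ := fun ξ hξ => by
    have := hρA _ (mk_mem_meanCostSet hξ)
    rw [ρ.apply_eq_sum_mul_single] at this
    simpa only [mul_comm (ξ _)] using this
  calc sInf D ≤ (∑ i, μ i * ρ (Pi.single i 1)) + θ :=
        csInf_le ⟨_, fun y hy => hweak _ hprimal y hy⟩ ⟨_, θ, hfeas, rfl⟩
    _ = ρ μ + θ := by rw [ρ.apply_eq_sum_mul_single]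
    _ ≤ w := hρμ

theorem stmt_6 (n : ℕ) (S : Set (Fin n → ℝ)) (hS : S.Nonempty) (hSc : IsCompact S)
    (hSm : MeasurableSet S) (f : (Fin n → ℝ) → ℝ) (hf : Measurable f)
    (M : ℝ) (hM : ∀ ξ ∈ S, |f ξ| ≤ M) (μ : Fin n → ℝ)
    (hμ : μ ∈ interior {m : Fin n → ℝ |
      ∃ Q : Measure (Fin n → ℝ), IsProbabilityMeasure Q ∧ Q Sᶜ = 0 ∧
        ∀ i, (∫ ξ, ξ i ∂Q) = m i}) :
    sSup {x : ℝ | ∃ P : Measure (Fin n → ℝ), IsProbabilityMeasure P ∧ P Sᶜ = 0 ∧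
        (∀ i, (∫ ξ, ξ i ∂P) = μ i) ∧ x = ∫ ξ, f ξ ∂P} =
    sInf {x : ℝ | ∃ (ρ : Fin n → ℝ) (θ : ℝ),
        (∀ ξ ∈ S, (∑ i, ρ i * ξ i) + θ ≥ f ξ) ∧ x = (∑ i, μ i * ρ i) + θ} :=
  stmt_6_general n S hSc f hf M hM μ hμ
end

section
/- Fix ρ ≥ 0 and empirical points ξ̂^1, …, ξ̂^R in a compact set S ⊆ ℝ^n. Then sup over probability measures Q on S with (1/R)·Σ_r ∫_S ‖ξ − ξ̂^r‖₁ dQ^r(ξ) ≤ ε of (1/R)·Σ_r ∫_S f dQ^r, where Q = (1/R)Σ_r δ_{ξ̂^r} ⊗ Q^r ranges over couplings, equals inf_{ρ ≥ 0} { ε·ρ + (1/R)·Σ_{r=1}^R sup_{ξ ∈ S} [ f(ξ) − ρ·‖ξ − ξ̂^r‖₁ ] }, for any bounded upper semicontinuous f : S → ℝ and any ε > 0. -/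
/-!
Weak duality is the pointwise bound `f ≤ sup_S (f - ρ c_r) + ρ c_r` integrated against each
`Q^r`. For the converse it suffices to mix two Dirac tuples: a tuple `ξ ∈ S^R` has a mean cost
`a ξ` and a mean value `b ξ`, and the primal value `V` bounds `t b ξ + (1 - t) b ζ` whenever
`t a ξ + (1 - t) a ζ ≤ ε`. As the tuple `ξ̂` has cost `0 < ε`, this says exactly that the slopes
`(b ξ - V) / (a ξ - ε)` of the expensive tuples lie below the slopes `(V - b ζ) / (ε - a ζ)` of
the cheap ones, so some `ρ ≥ 0` satisfies `b ξ + ρ (ε - a ξ) ≤ V` for every tuple. Maximising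
each coordinate of `ξ` separately turns this into `ε ρ + (1/R) ∑_r sup_S (f - ρ c_r) ≤ V`.
-/

open MeasureTheory

section IntegralOnSet

variable {X : Type*} [MeasurableSpace X] {μ : Measure X} {S : Set X}

lemma integrable_of_abs_le_on [IsFiniteMeasure μ] (hμ : μ Sᶜ = 0) {g : X → ℝ}
    (hg : Measurable g) {C : ℝ} (hC : ∀ ξ ∈ S, |g ξ| ≤ C) : Integrable g μ :=
  (integrable_const C).mono' hg.aestronglyMeasurable
    (Filter.eventually_of_mem (mem_ae_iff.mpr hμ) hC)

lemma integral_le_sSup_image [IsProbabilityMeasure μ] (hμ : μ Sᶜ = 0) {g : X → ℝ}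
    (hg : Integrable g μ) (hbdd : BddAbove (g '' S)) : ∫ ξ, g ξ ∂μ ≤ sSup (g '' S) := by
  simpa using integral_mono_ae hg (integrable_const (sSup (g '' S)))
    (Filter.eventually_of_mem (mem_ae_iff.mpr hμ) fun ξ hξ => le_csSup hbdd ⟨ξ, hξ, rfl⟩)

end IntegralOnSet

section DiracMix

variable {X : Type*} [MeasurableSpace X] {t : ℝ}

noncomputable def diracMix (t : ℝ) (x y : X) : Measure X :=
  ENNReal.ofReal t • Measure.dirac x + ENNReal.ofReal (1 - t) • Measure.dirac y

lemma isProbabilityMeasure_diracMix (ht0 : 0 ≤ t) (ht1 : t ≤ 1) (x y : X) :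
    IsProbabilityMeasure (diracMix t x y) :=
  ⟨by simp [diracMix, ← ENNReal.ofReal_add ht0 (sub_nonneg.2 ht1)]⟩

variable [MeasurableSingletonClass X]

lemma diracMix_compl_eq_zero {S : Set X} {x y : X} (hx : x ∈ S) (hy : y ∈ S) :
    diracMix t x y Sᶜ = 0 := by
  simp [diracMix, Measure.dirac_apply, hx, hy]

lemma integral_diracMix (ht0 : 0 ≤ t) (ht1 : t ≤ 1) (g : X → ℝ) (x y : X) :
    ∫ ξ, g ξ ∂(diracMix t x y) = t * g x + (1 - t) * g y := by
  have hint : ∀ z : X, Integrable g (Measure.dirac z) := fun z => integrable_dirac enorm_lt_top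
  rw [diracMix, integral_add_measure ((hint x).smul_measure ENNReal.ofReal_ne_top)
    ((hint y).smul_measure ENNReal.ofReal_ne_top), integral_smul_measure, integral_smul_measure,
    integral_dirac, integral_dirac, ENNReal.toReal_ofReal ht0,
    ENNReal.toReal_ofReal (sub_nonneg.2 ht1), smul_eq_mul, smul_eq_mul]

end DiracMix

/-- No boundedness is needed: an image that is unbounded above has the junk value `sSup = 0`
and still contains points above `sSup - η`. -/
lemma sum_csSup_image_le {ι X : Type*} [Fintype ι] {S : Set X} (hS : S.Nonempty)
    {F : ι → X → ℝ} {B : ℝ}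
    (h : ∀ ξ : ι → X, (∀ i, ξ i ∈ S) → ∑ i, F i (ξ i) ≤ B) :
    ∑ i, sSup (F i '' S) ≤ B := by
  refine le_of_forall_sub_le fun η hη => ?_
  set η' := η / (Fintype.card ι + 1)
  have hη' : 0 < η' := by positivity
  have hnear : ∀ i, ∃ ξ ∈ S, sSup (F i '' S) - η' < F i ξ := fun i => by
    obtain ⟨_, ⟨ξ, hξ, rfl⟩, hlt⟩ := exists_lt_of_lt_csSup (hS.image _) (sub_lt_self _ hη')
    exact ⟨ξ, hξ, hlt⟩
  choose ξ hξS hξ using hnear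
  have hcard : (Fintype.card ι : ℝ) * η' ≤ η := by
    rw [mul_div_assoc', div_le_iff₀ (by positivity)]
    nlinarith
  calc ∑ i, sSup (F i '' S) - η ≤ ∑ i, (sSup (F i '' S) - η') := by
        rw [Finset.sum_sub_distrib, Finset.sum_const, Finset.card_univ, nsmul_eq_mul]
        linarith
    _ ≤ ∑ i, F i (ξ i) := Finset.sum_le_sum fun i _ => (hξ i).le
    _ ≤ B := h ξ hξS

lemma exists_multiplier_of_mix_le {ι : Type*} (a b : ι → ℝ) {ε V : ℝ} (i₀ : ι) (hi₀ : a i₀ < ε)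
    (hmix : ∀ i j (t : ℝ), 0 ≤ t → t ≤ 1 → t * a i + (1 - t) * a j ≤ ε →
      t * b i + (1 - t) * b j ≤ V) :
    ∃ ρ, 0 ≤ ρ ∧ ∀ i, b i + ρ * (ε - a i) ≤ V := by
  have hle : ∀ i, a i ≤ ε → b i ≤ V := fun i hi => by
    simpa using hmix i i 1 zero_le_one le_rfl (by simpa using hi)
  set T := insert 0 ((fun j => (b j - V) / (a j - ε)) '' {j | ε < a j})
  have hT : ∀ i, a i < ε → ∀ s ∈ T, s ≤ (V - b i) / (ε - a i) := by
    intro i hi s hs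
    rcases hs with rfl | ⟨j, hj, rfl⟩
    · exact div_nonneg (sub_nonneg.2 (hle i hi.le)) (sub_nonneg.2 hi.le)
    · have hj : ε < a j := hj
      have hd : 0 < a j - a i := by linarith
      -- the mixture of `i` and `j` whose cost is exactly `ε`
      have hmid := hmix i j ((a j - ε) / (a j - a i)) (div_nonneg (by linarith) hd.le)
        ((div_le_one hd).2 (by linarith)) (le_of_eq (by field_simp; ring))
      have hval : (a j - ε) / (a j - a i) * b i + (1 - (a j - ε) / (a j - a i)) * b j
          = ((a j - ε) * b i + (ε - a i) * b j) / (a j - a i) := by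
        field_simp; ring
      rw [hval, div_le_iff₀ hd] at hmid
      rw [div_le_div_iff₀ (by linarith) (by linarith)]
      nlinarith
  have hbdd : BddAbove T := ⟨_, hT i₀ hi₀⟩
  refine ⟨sSup T, le_csSup hbdd (Set.mem_insert _ _), fun i => ?_⟩
  rcases lt_trichotomy (a i) ε with hi | hi | hi
  · have := csSup_le ⟨0, Set.mem_insert _ _⟩ (hT i hi)
    rw [le_div_iff₀ (sub_pos.2 hi)] at this
    linarith
  · simp [hi, hle i hi.le]
  · have := le_csSup hbdd (Set.mem_insert_of_mem _ ⟨i, hi, rfl⟩)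
    rw [div_le_iff₀ (sub_pos.2 hi)] at this
    linarith

lemma bddAbove_image_sub_mul {X : Type*} {S : Set X} {f c : X → ℝ} {M C : ℝ}
    (hM : ∀ ξ ∈ S, |f ξ| ≤ M) (hC : ∀ ξ ∈ S, |c ξ| ≤ C) (ρ : ℝ) :
    BddAbove ((fun ξ => f ξ - ρ * c ξ) '' S) := by
  refine ⟨M + |ρ| * C, ?_⟩
  rintro _ ⟨ξ, hξ, rfl⟩
  calc f ξ - ρ * c ξ ≤ |f ξ| + |ρ| * |c ξ| := by
        rw [← abs_mul]; linarith [le_abs_self (f ξ), neg_abs_le (ρ * c ξ)]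
    _ ≤ M + |ρ| * C := by gcongr <;> [exact hM ξ hξ; exact hC ξ hξ]

section Duality

variable {X : Type*} [MeasurableSpace X] {R : ℕ} {S : Set X} {c : Fin R → X → ℝ} {f : X → ℝ}
  {ε : ℝ}

variable (S c f ε) in
/-- `Q r` is the conditional distribution `Q^r` of the coupling given `ξ̂ = ξ̂^r`. -/
def primalValues : Set ℝ :=
  {x : ℝ | ∃ Q : Fin R → Measure X,
    (∀ r, IsProbabilityMeasure (Q r)) ∧ (∀ r, Q r Sᶜ = 0) ∧
    ((1 / (R : ℝ)) * ∑ r, ∫ ξ, c r ξ ∂(Q r) ≤ ε) ∧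
    x = (1 / (R : ℝ)) * ∑ r, ∫ ξ, f ξ ∂(Q r)}

variable (S c f ε) in
noncomputable def dualObjective (ρ : ℝ) : ℝ :=
  ε * ρ + (1 / (R : ℝ)) * ∑ r, sSup ((fun ξ => f ξ - ρ * c r ξ) '' S)

lemma le_dualObjective (hcm : ∀ r, Measurable (c r)) (hcb : ∀ r, ∃ C, ∀ ξ ∈ S, |c r ξ| ≤ C)
    (hfm : Measurable f) {M : ℝ} (hM : ∀ ξ ∈ S, |f ξ| ≤ M) {x : ℝ}
    (hx : x ∈ primalValues S c f ε) {ρ : ℝ} (hρ : 0 ≤ ρ) : x ≤ dualObjective S c f ε ρ := by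
  obtain ⟨Q, hQ, hQS, hcost, rfl⟩ := hx
  have hpointwise : ∀ r, ∫ ξ, f ξ ∂(Q r)
      ≤ sSup ((fun ξ => f ξ - ρ * c r ξ) '' S) + ρ * ∫ ξ, c r ξ ∂(Q r) := by
    intro r
    obtain ⟨C, hC⟩ := hcb r
    have hf := integrable_of_abs_le_on (hQS r) hfm hM
    have hc := (integrable_of_abs_le_on (hQS r) (hcm r) hC).const_mul ρ
    have := integral_le_sSup_image (g := fun ξ => f ξ - ρ * c r ξ) (hQS r) (hf.sub hc)
      (bddAbove_image_sub_mul hM hC ρ)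
    rw [integral_sub hf hc, integral_const_mul] at this
    linarith
  have hsum := Finset.sum_le_sum fun r (_ : r ∈ Finset.univ) => hpointwise r
  rw [Finset.sum_add_distrib, ← Finset.mul_sum] at hsum
  have := mul_le_mul_of_nonneg_left hsum (by positivity : (0 : ℝ) ≤ 1 / R)
  rw [dualObjective]
  nlinarith [mul_le_mul_of_nonneg_left hcost hρ]

lemma mean_integral_diracMix [MeasurableSingletonClass X] {t : ℝ} (ht0 : 0 ≤ t) (ht1 : t ≤ 1)
    (g : Fin R → X → ℝ) (ξ ζ : Fin R → X) :
    (1 / (R : ℝ)) * ∑ r, ∫ x, g r x ∂(diracMix t (ξ r) (ζ r))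
      = t * ((1 / (R : ℝ)) * ∑ r, g r (ξ r)) + (1 - t) * ((1 / (R : ℝ)) * ∑ r, g r (ζ r)) := by
  simp only [integral_diracMix ht0 ht1, Finset.sum_add_distrib, ← Finset.mul_sum]
  ring

lemma mix_mem_primalValues [MeasurableSingletonClass X] {ξ ζ : Fin R → X}
    (hξ : ∀ r, ξ r ∈ S) (hζ : ∀ r, ζ r ∈ S) {t : ℝ} (ht0 : 0 ≤ t) (ht1 : t ≤ 1)
    (hcost : t * ((1 / (R : ℝ)) * ∑ r, c r (ξ r)) + (1 - t) * ((1 / (R : ℝ)) * ∑ r, c r (ζ r))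
      ≤ ε) :
    t * ((1 / (R : ℝ)) * ∑ r, f (ξ r)) + (1 - t) * ((1 / (R : ℝ)) * ∑ r, f (ζ r))
      ∈ primalValues S c f ε :=
  ⟨fun r => diracMix t (ξ r) (ζ r), fun _ => isProbabilityMeasure_diracMix ht0 ht1 _ _,
    fun r => diracMix_compl_eq_zero (hξ r) (hζ r),
    (mean_integral_diracMix ht0 ht1 c ξ ζ).trans_le hcost,
    (mean_integral_diracMix ht0 ht1 (fun _ => f) ξ ζ).symm⟩

lemma exists_dualObjective_le [MeasurableSingletonClass X] (hR : 0 < R)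
    (ξ₀ : Fin R → X) (hξ₀ : ∀ r, ξ₀ r ∈ S) (hslater : (1 / (R : ℝ)) * ∑ r, c r (ξ₀ r) < ε)
    (hP : BddAbove (primalValues S c f ε)) :
    ∃ ρ, 0 ≤ ρ ∧ dualObjective S c f ε ρ ≤ sSup (primalValues S c f ε) := by
  set V := sSup (primalValues S c f ε)
  obtain ⟨ρ, hρ, hmult⟩ := exists_multiplier_of_mix_le
    (fun ξ : {ξ : Fin R → X // ∀ r, ξ r ∈ S} => (1 / (R : ℝ)) * ∑ r, c r (ξ.1 r))
    (fun ξ => (1 / (R : ℝ)) * ∑ r, f (ξ.1 r)) ⟨ξ₀, hξ₀⟩ hslater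
    fun ξ ζ t ht0 ht1 hcost => le_csSup hP (mix_mem_primalValues ξ.2 ζ.2 ht0 ht1 hcost)
  have hRR : (R : ℝ) * (1 / R) = 1 := by field_simp
  have hsum : ∑ r, sSup ((fun ξ => f ξ - ρ * c r ξ) '' S) ≤ R * (V - ε * ρ) := by
    refine sum_csSup_image_le ⟨ξ₀ ⟨0, hR⟩, hξ₀ _⟩ fun ξ hξ => ?_
    have := hmult ⟨ξ, hξ⟩
    dsimp only at this ⊢
    rw [Finset.sum_sub_distrib, ← Finset.mul_sum]
    linear_combination (R : ℝ) * this - (∑ r, f (ξ r) - ρ * ∑ r, c r (ξ r)) * hRR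
  refine ⟨ρ, hρ, ?_⟩
  rw [dualObjective]
  have := mul_le_mul_of_nonneg_left hsum (by positivity : (0 : ℝ) ≤ 1 / R)
  linear_combination this + (V - ε * ρ) * hRR

theorem sSup_primalValues_eq_sInf_dualObjective [MeasurableSingletonClass X] (hR : 0 < R)
    (hcm : ∀ r, Measurable (c r)) (hcb : ∀ r, ∃ C, ∀ ξ ∈ S, |c r ξ| ≤ C)
    (hfm : Measurable f) {M : ℝ} (hM : ∀ ξ ∈ S, |f ξ| ≤ M)
    (ξ₀ : Fin R → X) (hξ₀ : ∀ r, ξ₀ r ∈ S) (hslater : (1 / (R : ℝ)) * ∑ r, c r (ξ₀ r) < ε) :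
    sSup (primalValues S c f ε) = sInf {x | ∃ ρ, 0 ≤ ρ ∧ x = dualObjective S c f ε ρ} := by
  have hweak : ∀ x ∈ primalValues S c f ε, ∀ ρ, 0 ≤ ρ → x ≤ dualObjective S c f ε ρ :=
    fun _ hx _ hρ => le_dualObjective hcm hcb hfm hM hx hρ
  have hP : BddAbove (primalValues S c f ε) := ⟨_, fun x hx => hweak x hx 0 le_rfl⟩
  obtain ⟨x₀, hx₀⟩ : (primalValues S c f ε).Nonempty :=
    ⟨_, mix_mem_primalValues hξ₀ hξ₀ zero_le_one le_rfl (by linarith)⟩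
  obtain ⟨ρ, hρ, hle⟩ := exists_dualObjective_le hR ξ₀ hξ₀ hslater hP
  refine le_antisymm (csSup_le ⟨x₀, hx₀⟩ fun x hx => le_csInf ⟨_, 0, le_rfl, rfl⟩ ?_) ?_
  · rintro _ ⟨ρ, hρ, rfl⟩
    exact hweak x hx ρ hρ
  · have hD : BddBelow {x | ∃ ρ, 0 ≤ ρ ∧ x = dualObjective S c f ε ρ} := by
      refine ⟨x₀, ?_⟩
      rintro _ ⟨ρ, hρ, rfl⟩
      exact hweak x₀ hx₀ ρ hρ
    exact (csInf_le hD ⟨ρ, hρ, rfl⟩).trans hle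

end Duality

theorem stmt_11_general (n R : ℕ) (hR : 0 < R) (S : Set (Fin n → ℝ))
    (hSc : IsCompact S)
    (xhat : Fin R → (Fin n → ℝ)) (hxhat : ∀ r, xhat r ∈ S)
    (f : (Fin n → ℝ) → ℝ) (hfm : Measurable f)
    (M : ℝ) (hM : ∀ ξ ∈ S, |f ξ| ≤ M)
    (ε : ℝ) (hε : 0 < ε) :
    sSup {x : ℝ | ∃ Q : Fin R → Measure (Fin n → ℝ),
        (∀ r, IsProbabilityMeasure (Q r)) ∧ (∀ r, Q r Sᶜ = 0) ∧
        ((1 / (R : ℝ)) * ∑ r, ∫ ξ, (∑ i, |ξ i - xhat r i|) ∂(Q r) ≤ ε) ∧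
        x = (1 / (R : ℝ)) * ∑ r, ∫ ξ, f ξ ∂(Q r)} =
    sInf {x : ℝ | ∃ ρ : ℝ, 0 ≤ ρ ∧
        x = ε * ρ + (1 / (R : ℝ)) * ∑ r,
          sSup ((fun ξ => f ξ - ρ * ∑ i, |ξ i - xhat r i|) '' S)} := by
  have hcont : ∀ r, Continuous fun ξ : Fin n → ℝ => ∑ i, |ξ i - xhat r i| := fun r => by fun_prop
  exact sSup_primalValues_eq_sInf_dualObjective hR (fun r => (hcont r).measurable)
    (fun r => by simpa using hSc.exists_bound_of_continuousOn (hcont r).continuousOn) hfm hM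
    xhat hxhat (by simpa using hε)

theorem stmt_11 (n R : ℕ) (hR : 0 < R) (S : Set (Fin n → ℝ)) (hS : S.Nonempty)
    (hSc : IsCompact S) (hSm : MeasurableSet S)
    (xhat : Fin R → (Fin n → ℝ)) (hxhat : ∀ r, xhat r ∈ S)
    (f : (Fin n → ℝ) → ℝ) (hfm : Measurable f)
    (M : ℝ) (hM : ∀ ξ ∈ S, |f ξ| ≤ M) (hfu : UpperSemicontinuousOn f S)
    (ε : ℝ) (hε : 0 < ε) :
    sSup {x : ℝ | ∃ Q : Fin R → Measure (Fin n → ℝ),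
        (∀ r, IsProbabilityMeasure (Q r)) ∧ (∀ r, Q r Sᶜ = 0) ∧
        ((1 / (R : ℝ)) * ∑ r, ∫ ξ, (∑ i, |ξ i - xhat r i|) ∂(Q r) ≤ ε) ∧
        x = (1 / (R : ℝ)) * ∑ r, ∫ ξ, f ξ ∂(Q r)} =
    sInf {x : ℝ | ∃ ρ : ℝ, 0 ≤ ρ ∧
        x = ε * ρ + (1 / (R : ℝ)) * ∑ r,
          sSup ((fun ξ => f ξ - ρ * ∑ i, |ξ i - xhat r i|) '' S)} :=
  stmt_11_general n R hR S hSc xhat hxhat f hfm M hM ε hε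
end

section
/- Let c^u, c^w be nonnegative vectors indexed by [N+2] with c^u_{N+2} = c^w_{N+2} = 0, and define π_{j,v} = −c^u_v + Σ_{l=j}^{v−1} c^w_l for 1 ≤ j ≤ v ≤ N+2. Let P^l = min over 2 ≤ j ≤ N+1, j ≤ v ≤ N+2 of π_{j,v} and P^u the corresponding max. Let μ, l, u be reals with l ≤ μ ≤ u, l ≤ u. Then the function ρ ↦ μ·ρ + Σ-term of the form Σ c_{j,v}·[(π_{j,v} − ρ)·l + (u − l)·(π_{j,v} − ρ)⁺] with nonnegative weights c_{j,v} summing over the index set, is nondecreasing in ρ for ρ ≥ P^u and nonincreasing for ρ ≤ P^l; hence some minimizer over ρ lies in [P^l, P^u]. -/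
/-- `π j v = -c^u_v + ∑_{l=j}^{v-1} c^w_l`. -/
noncomputable def piCoef (cu cw : ℕ → ℝ) (j v : ℕ) : ℝ :=
  -cu v + ∑ l ∈ Finset.Ico j v, cw l

/-- the index set `{(j,v) : 2 ≤ j ≤ N+1, j ≤ v ≤ N+2}`. -/
def idxSet (N : ℕ) : Finset (ℕ × ℕ) :=
  ((Finset.Icc 2 (N + 1)) ×ˢ (Finset.Icc 2 (N + 2))).filter (fun p => p.1 ≤ p.2)

theorem stmt_15 (N : ℕ) (hN : 1 ≤ N) (cu cw : ℕ → ℝ)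
    (hcu : ∀ j, 0 ≤ cu j) (hcw : ∀ j, 0 ≤ cw j)
    (hcu' : cu (N + 2) = 0) (hcw' : cw (N + 2) = 0)
    (hne : (idxSet N).Nonempty)
    (c : ℕ → ℕ → ℝ) (hc : ∀ p ∈ idxSet N, 0 ≤ c p.1 p.2)
    (hcsum : ∑ p ∈ idxSet N, c p.1 p.2 = 1)
    (μ l u : ℝ) (hlμ : l ≤ μ) (hμu : μ ≤ u) (hlu : l ≤ u) :
    let Pl : ℝ := (idxSet N).inf' hne (fun p => piCoef cu cw p.1 p.2)
    let Pu : ℝ := (idxSet N).sup' hne (fun p => piCoef cu cw p.1 p.2)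
    let h : ℝ → ℝ := fun ρ => μ * ρ + ∑ p ∈ idxSet N,
      c p.1 p.2 * ((piCoef cu cw p.1 p.2 - ρ) * l +
        (u - l) * max (piCoef cu cw p.1 p.2 - ρ) 0)
    MonotoneOn h (Set.Ici Pu) ∧ AntitoneOn h (Set.Iic Pl) ∧
    ∃ ρ₀ ∈ Set.Icc Pl Pu, ∀ ρ : ℝ, h ρ₀ ≤ h ρ := by
  intro Pl Pu h
  set S := idxSet N with hS
  have hPu : ∀ p ∈ S, piCoef cu cw p.1 p.2 ≤ Pu :=
    fun p hp => Finset.le_sup' (fun p => piCoef cu cw p.1 p.2) hp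
  have hPl : ∀ p ∈ S, Pl ≤ piCoef cu cw p.1 p.2 :=
    fun p hp => Finset.inf'_le (fun p => piCoef cu cw p.1 p.2) hp
  have hPlPu : Pl ≤ Pu := by
    obtain ⟨p, hp⟩ := hne
    exact le_trans (hPl p hp) (hPu p hp)
  -- closed forms on the two rays
  have hupper : ∀ ρ, Pu ≤ ρ →
      h ρ = (μ - l) * ρ + l * ∑ p ∈ S, c p.1 p.2 * piCoef cu cw p.1 p.2 := by
    intro ρ hρ
    have hterm : ∀ p ∈ S, c p.1 p.2 * ((piCoef cu cw p.1 p.2 - ρ) * l +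
        (u - l) * max (piCoef cu cw p.1 p.2 - ρ) 0)
        = l * (c p.1 p.2 * piCoef cu cw p.1 p.2) - c p.1 p.2 * (l * ρ) := by
      intro p hp
      have hle : piCoef cu cw p.1 p.2 ≤ ρ := le_trans (hPu p hp) hρ
      rw [max_eq_right (by linarith)]
      ring
    show μ * ρ + _ = _
    rw [Finset.sum_congr rfl hterm, Finset.sum_sub_distrib, ← Finset.mul_sum,
      ← Finset.sum_mul, hcsum]
    ring
  have hlower : ∀ ρ, ρ ≤ Pl →
      h ρ = (μ - u) * ρ + u * ∑ p ∈ S, c p.1 p.2 * piCoef cu cw p.1 p.2 := by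
    intro ρ hρ
    have hterm : ∀ p ∈ S, c p.1 p.2 * ((piCoef cu cw p.1 p.2 - ρ) * l +
        (u - l) * max (piCoef cu cw p.1 p.2 - ρ) 0)
        = u * (c p.1 p.2 * piCoef cu cw p.1 p.2) - c p.1 p.2 * (u * ρ) := by
      intro p hp
      have hle : ρ ≤ piCoef cu cw p.1 p.2 := le_trans hρ (hPl p hp)
      rw [max_eq_left (by linarith)]
      ring
    show μ * ρ + _ = _
    rw [Finset.sum_congr rfl hterm, Finset.sum_sub_distrib, ← Finset.mul_sum,
      ← Finset.sum_mul, hcsum]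
    ring
  have hmono : MonotoneOn h (Set.Ici Pu) := by
    intro a ha b hb hab
    rw [hupper a ha, hupper b hb]
    nlinarith [mul_le_mul_of_nonneg_left hab (by linarith : (0:ℝ) ≤ μ - l)]
  have hanti : AntitoneOn h (Set.Iic Pl) := by
    intro a ha b hb hab
    rw [hlower a ha, hlower b hb]
    nlinarith [mul_le_mul_of_nonneg_left hab (by linarith : (0:ℝ) ≤ u - μ)]
  refine ⟨hmono, hanti, ?_⟩
  have hcont : Continuous h := by
    apply Continuous.add (continuous_const.mul continuous_id)
    apply continuous_finset_sum
    intro p _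
    exact continuous_const.mul (((continuous_const.sub continuous_id).mul
      continuous_const).add (continuous_const.mul
      ((continuous_const.sub continuous_id).max continuous_const)))
  obtain ⟨ρ₀, hρ₀mem, hρ₀min⟩ :=
    (isCompact_Icc).exists_isMinOn (Set.nonempty_Icc.2 hPlPu) hcont.continuousOn
  refine ⟨ρ₀, hρ₀mem, fun ρ => ?_⟩
  rcases le_or_gt ρ Pl with hρ | hρ
  · exact le_trans (hρ₀min ⟨le_refl Pl, hPlPu⟩)
      (hanti hρ (le_refl Pl) hρ)
  · rcases le_or_gt ρ Pu with hρ' | hρ'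
    · exact hρ₀min ⟨hρ.le, hρ'⟩
    · exact le_trans (hρ₀min ⟨hPlPu, le_refl Pu⟩)
        (hmono (le_refl Pu) hρ'.le hρ'.le)
end

section
/- Suppose the service and travel time distributions of customers 1, …, N are exchangeable in the following sense: for every permutation Π of [N] fixing the first and last customers of a route, the random vector of service times (d_{Π(i)})_i has the same joint distribution as (d_i)_i and similarly for pairwise travel times. Let route x visit customers (i_1, …, i_N) and route x^Π visit (Π(i_1), …, Π(i_N)) with Π(i_1) = i_1 and Π(i_N) = i_N. Then for any appointment schedule a, the waiting times w_j, idle times u_j (defined recursively by w_1 − u_1 = t_{0,i_1} − a_1 and w_j = max{w_{j−1} + a_{j−1} − a_j + d_{i_{j−1}} + t_{i_{j−1}, i_j}, 0}, u_j = max{−(w_{j−1} + a_{j−1} − a_j + d_{i_{j−1}} + t_{i_{j−1}, i_j}), 0}) under route x have the same joint distribution as those under route x^Π, and hence the total second-stage cost f(x, a, ξ) has the same distribution as f(x^Π, a, ξ). -/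
open MeasureTheory

/-- Waiting time of the `j`-th customer on route `r` (position → customer, with
depot `0`), appointment schedule `a`, service times `d` and travel times `t`:
`w 1 = (t_{0,i_1} - a_1)⁺`, and
`w j = (w_{j-1} + a_{j-1} - a_j + d_{i_{j-1}} + t_{i_{j-1}, i_j})⁺` for `j ≥ 2`. -/
noncomputable def waitT {Ω : Type*} (d : ℕ → Ω → ℝ) (t : ℕ → ℕ → Ω → ℝ)
    (r : ℕ → ℕ) (a : ℕ → ℝ) : ℕ → Ω → ℝ
  | 0 => fun _ => 0
  | 1 => fun ω => max (t 0 (r 1) ω - a 1) 0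
  | (j + 2) => fun ω =>
      max (waitT d t r a (j + 1) ω + a (j + 1) - a (j + 2) +
        d (r (j + 1)) ω + t (r (j + 1)) (r (j + 2)) ω) 0

/-- Idle time of the operator before the `j`-th appointment, the negative part
of the same recursive expressions. -/
noncomputable def idleT {Ω : Type*} (d : ℕ → Ω → ℝ) (t : ℕ → ℕ → Ω → ℝ)
    (r : ℕ → ℕ) (a : ℕ → ℝ) : ℕ → Ω → ℝ
  | 0 => fun _ => 0
  | 1 => fun ω => max (a 1 - t 0 (r 1) ω) 0
  | (j + 2) => fun ω =>
      max (-(waitT d t r a (j + 1) ω + a (j + 1) - a (j + 2) +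
        d (r (j + 1)) ω + t (r (j + 1)) (r (j + 2)) ω)) 0

/-- Waiting time as a function of the realized service/travel vectors. -/
noncomputable def waitF (r : ℕ → ℕ) (a : ℕ → ℝ) : ℕ → ((ℕ → ℝ) × (ℕ × ℕ → ℝ)) → ℝ
  | 0 => fun _ => 0
  | 1 => fun p => max (p.2 (0, r 1) - a 1) 0
  | (j + 2) => fun p =>
      max (waitF r a (j + 1) p + a (j + 1) - a (j + 2) +
        p.1 (r (j + 1)) + p.2 (r (j + 1), r (j + 2))) 0

noncomputable def idleF (r : ℕ → ℕ) (a : ℕ → ℝ) : ℕ → ((ℕ → ℝ) × (ℕ × ℕ → ℝ)) → ℝ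
  | 0 => fun _ => 0
  | 1 => fun p => max (a 1 - p.2 (0, r 1)) 0
  | (j + 2) => fun p =>
      max (-(waitF r a (j + 1) p + a (j + 1) - a (j + 2) +
        p.1 (r (j + 1)) + p.2 (r (j + 1), r (j + 2)))) 0

lemma waitF_meas (r : ℕ → ℕ) (a : ℕ → ℝ) : ∀ j, Measurable (waitF r a j) := by
  intro j
  induction j using Nat.strong_induction_on with
  | _ j ih =>
    match j with
    | 0 => exact measurable_const
    | 1 =>
      exact (((measurable_pi_apply _).comp measurable_snd).sub measurable_const).max
        measurable_const
    | (j + 2) =>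
      exact (((((ih (j + 1) (by omega)).add measurable_const).sub measurable_const).add
        ((measurable_pi_apply _).comp measurable_fst)).add
        ((measurable_pi_apply _).comp measurable_snd)).max measurable_const

lemma idleF_meas (r : ℕ → ℕ) (a : ℕ → ℝ) : ∀ j, Measurable (idleF r a j) := by
  intro j
  match j with
  | 0 => exact measurable_const
  | 1 =>
    exact ((measurable_const.sub ((measurable_pi_apply _).comp measurable_snd)).max
      measurable_const)
  | (j + 2) =>
    exact ((((((waitF_meas r a (j + 1)).add measurable_const).sub measurable_const).add
      ((measurable_pi_apply _).comp measurable_fst)).add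
      ((measurable_pi_apply _).comp measurable_snd)).neg).max measurable_const

lemma waitT_eq_waitF {Ω : Type*} (d : ℕ → Ω → ℝ) (t : ℕ → ℕ → Ω → ℝ)
    (r : ℕ → ℕ) (a : ℕ → ℝ) (j : ℕ) (ω : Ω) :
    waitT d t r a j ω = waitF r a j ((fun i => d i ω), (fun p => t p.1 p.2 ω)) := by
  induction j using Nat.strong_induction_on with
  | _ j ih =>
    match j with
    | 0 => rfl
    | 1 => rfl
    | (j + 2) =>
      simp only [waitT, waitF, ih (j + 1) (by omega)]

lemma idleT_eq_idleF {Ω : Type*} (d : ℕ → Ω → ℝ) (t : ℕ → ℕ → Ω → ℝ)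
    (r : ℕ → ℕ) (a : ℕ → ℝ) (j : ℕ) (ω : Ω) :
    idleT d t r a j ω = idleF r a j ((fun i => d i ω), (fun p => t p.1 p.2 ω)) := by
  match j with
  | 0 => rfl
  | 1 => rfl
  | (j + 2) =>
    simp only [idleT, idleF, waitT_eq_waitF]

lemma waitT_perm {Ω : Type*} (d : ℕ → Ω → ℝ) (t : ℕ → ℕ → Ω → ℝ)
    (r : ℕ → ℕ) (a : ℕ → ℝ) (Pi : Equiv.Perm ℕ) (hPi0 : Pi 0 = 0) (j : ℕ) (ω : Ω) :
    waitT d t (Pi ∘ r) a j ω =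
      waitF r a j ((fun i => d (Pi i) ω), (fun p => t (Pi p.1) (Pi p.2) ω)) := by
  induction j using Nat.strong_induction_on with
  | _ j ih =>
    match j with
    | 0 => rfl
    | 1 => simp only [waitT, waitF, Function.comp, hPi0]
    | (j + 2) =>
      simp only [waitT, waitF, ih (j + 1) (by omega), Function.comp]

lemma idleT_perm {Ω : Type*} (d : ℕ → Ω → ℝ) (t : ℕ → ℕ → Ω → ℝ)
    (r : ℕ → ℕ) (a : ℕ → ℝ) (Pi : Equiv.Perm ℕ) (hPi0 : Pi 0 = 0) (j : ℕ) (ω : Ω) :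
    idleT d t (Pi ∘ r) a j ω =
      idleF r a j ((fun i => d (Pi i) ω), (fun p => t (Pi p.1) (Pi p.2) ω)) := by
  match j with
  | 0 => rfl
  | 1 => simp only [idleT, idleF, Function.comp, hPi0]
  | (j + 2) =>
    simp only [idleT, idleF, waitT_perm d t r a Pi hPi0, Function.comp]

theorem stmt_18 {Ω : Type*} [MeasurableSpace Ω] (P : Measure Ω)
    (hP : IsProbabilityMeasure P) (N : ℕ) (hN : 1 ≤ N)
    (d : ℕ → Ω → ℝ) (t : ℕ → ℕ → Ω → ℝ)
    (hd : ∀ i, Measurable (d i)) (ht : ∀ i i', Measurable (t i i'))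
    (r : ℕ → ℕ) (hr : ∀ j, 1 ≤ j → j ≤ N → 1 ≤ r j ∧ r j ≤ N)
    (a : ℕ → ℝ)
    (Pi : Equiv.Perm ℕ) (hPi0 : Pi 0 = 0) (hPifirst : Pi (r 1) = r 1)
    (hPilast : Pi (r N) = r N)
    -- exchangeability: the joint law of the permuted service and travel times
    -- coincides with the joint law of the original ones
    (hexch : Measure.map (fun ω =>
        ((fun i : ℕ => d (Pi i) ω), (fun p : ℕ × ℕ => t (Pi p.1) (Pi p.2) ω))) P =
      Measure.map (fun ω =>
        ((fun i : ℕ => d i ω), (fun p : ℕ × ℕ => t p.1 p.2 ω))) P) :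
    -- the waiting and idle times have the same joint distribution under the
    -- route `r` and the permuted route `Pi ∘ r`,
    Measure.map (fun ω =>
        ((fun j : Fin N => waitT d t r a (j.val + 1) ω),
          (fun j : Fin N => idleT d t r a (j.val + 1) ω))) P =
      Measure.map (fun ω =>
        ((fun j : Fin N => waitT d t (Pi ∘ r) a (j.val + 1) ω),
          (fun j : Fin N => idleT d t (Pi ∘ r) a (j.val + 1) ω))) P ∧
    -- and hence any measurable cost of the waiting and idle times has the same
    -- distribution under the two routes
    ∀ F : (Fin N → ℝ) × (Fin N → ℝ) → ℝ, Measurable F →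
      Measure.map (fun ω => F
          ((fun j : Fin N => waitT d t r a (j.val + 1) ω),
            (fun j : Fin N => idleT d t r a (j.val + 1) ω))) P =
        Measure.map (fun ω => F
          ((fun j : Fin N => waitT d t (Pi ∘ r) a (j.val + 1) ω),
            (fun j : Fin N => idleT d t (Pi ∘ r) a (j.val + 1) ω))) P := by
  -- the map sending realized vectors to the waiting/idle profiles
  set Φ : ((ℕ → ℝ) × (ℕ × ℕ → ℝ)) → (Fin N → ℝ) × (Fin N → ℝ) :=
    fun p => ((fun j : Fin N => waitF r a (j.val + 1) p),
              (fun j : Fin N => idleF r a (j.val + 1) p)) with hΦdef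
  have hΦ : Measurable Φ := by
    refine Measurable.prod ?_ ?_
    · exact measurable_pi_lambda _ (fun j => waitF_meas r a (j.val + 1))
    · exact measurable_pi_lambda _ (fun j => idleF_meas r a (j.val + 1))
  have hX : Measurable (fun ω => ((fun i : ℕ => d i ω), (fun p : ℕ × ℕ => t p.1 p.2 ω))) :=
    Measurable.prod (measurable_pi_lambda _ fun i => hd i)
      (measurable_pi_lambda _ fun p => ht p.1 p.2)
  have hX' : Measurable (fun ω =>
      ((fun i : ℕ => d (Pi i) ω), (fun p : ℕ × ℕ => t (Pi p.1) (Pi p.2) ω))) :=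
    Measurable.prod (measurable_pi_lambda _ fun i => hd (Pi i))
      (measurable_pi_lambda _ fun p => ht (Pi p.1) (Pi p.2))
  have h1 : (fun ω =>
        ((fun j : Fin N => waitT d t r a (j.val + 1) ω),
          (fun j : Fin N => idleT d t r a (j.val + 1) ω))) =
      Φ ∘ (fun ω => ((fun i : ℕ => d i ω), (fun p : ℕ × ℕ => t p.1 p.2 ω))) := by
    funext ω
    simp only [hΦdef, Function.comp]
    exact Prod.ext (funext fun j => waitT_eq_waitF d t r a _ ω)
      (funext fun j => idleT_eq_idleF d t r a _ ω)
  have h2 : (fun ω =>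
        ((fun j : Fin N => waitT d t (Pi ∘ r) a (j.val + 1) ω),
          (fun j : Fin N => idleT d t (Pi ∘ r) a (j.val + 1) ω))) =
      Φ ∘ (fun ω => ((fun i : ℕ => d (Pi i) ω), (fun p : ℕ × ℕ => t (Pi p.1) (Pi p.2) ω))) := by
    funext ω
    simp only [hΦdef, Function.comp]
    exact Prod.ext (funext fun j => waitT_perm d t r a Pi hPi0 _ ω)
      (funext fun j => idleT_perm d t r a Pi hPi0 _ ω)
  have key : Measure.map (fun ω =>
        ((fun j : Fin N => waitT d t r a (j.val + 1) ω),
          (fun j : Fin N => idleT d t r a (j.val + 1) ω))) P =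
      Measure.map (fun ω =>
        ((fun j : Fin N => waitT d t (Pi ∘ r) a (j.val + 1) ω),
          (fun j : Fin N => idleT d t (Pi ∘ r) a (j.val + 1) ω))) P := by
    rw [h1, h2, ← Measure.map_map hΦ hX, ← Measure.map_map hΦ hX', hexch]
  refine ⟨key, fun F hF => ?_⟩
  have hvec : Measurable (fun ω =>
      ((fun j : Fin N => waitT d t r a (j.val + 1) ω),
        (fun j : Fin N => idleT d t r a (j.val + 1) ω))) := by
    rw [h1]; exact hΦ.comp hX
  have hvec' : Measurable (fun ω =>
      ((fun j : Fin N => waitT d t (Pi ∘ r) a (j.val + 1) ω),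
        (fun j : Fin N => idleT d t (Pi ∘ r) a (j.val + 1) ω))) := by
    rw [h2]; exact hΦ.comp hX'
  calc Measure.map (fun ω => F
          ((fun j : Fin N => waitT d t r a (j.val + 1) ω),
            (fun j : Fin N => idleT d t r a (j.val + 1) ω))) P
      = Measure.map F (Measure.map (fun ω =>
          ((fun j : Fin N => waitT d t r a (j.val + 1) ω),
            (fun j : Fin N => idleT d t r a (j.val + 1) ω))) P) :=
        (Measure.map_map hF hvec).symm
    _ = Measure.map F (Measure.map (fun ω =>
          ((fun j : Fin N => waitT d t (Pi ∘ r) a (j.val + 1) ω),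
            (fun j : Fin N => idleT d t (Pi ∘ r) a (j.val + 1) ω))) P) := by rw [key]
    _ = _ := Measure.map_map hF hvec'
end
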